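/- Let a ∈ O_L and let (F_m)_{m≥0} be a sequence in Λ that is norm-compatible for a. Then for every m ≥ 1, both entries of the vector C'_1·C'_2···C'_m·(F_m, −Φ_m·F_{m−1})ᵀ lie in the ideal Φ_1·Φ_2···Φ_m·Λ. (This is the divisibility (3.5) established by induction in the proof of Theorem 3.3 of the paper.) -/

import Mathlib

/-!
Setting: `p ≥ 5` a prime, `𝕆` the ring of integers of a finite extension of `ℚ_p`
(modelled as a characteristic-zero discrete valuation ring) with uniformizer `ϖ`
satisfying `ϖ ∣ p`, and `Λ = 𝕆⟦X⟧`.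
-/

open PowerSeries

/-- `ω_m = (1+X)^{p^m} − 1`. -/
noncomputable def omegaPS (p : ℕ) (R : Type*) [CommRing R] (m : ℕ) : PowerSeries R :=
  (1 + PowerSeries.X) ^ (p ^ m) - 1

/-- `Φ_m = Σ_{i<p} (1+X)^{i·p^{m−1}}` (meaningful for `m ≥ 1`). -/
noncomputable def PhiPS (p : ℕ) (R : Type*) [CommRing R] (m : ℕ) : PowerSeries R :=
  ∑ i ∈ Finset.range p, (1 + PowerSeries.X) ^ (i * p ^ (m - 1))

/-- The adjugate matrix `C'_j = ((0, −1), (Φ_j, a))` of `C_j`. -/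
noncomputable def Cadj (p : ℕ) (R : Type*) [CommRing R] (a : R) (j : ℕ) :
    Matrix (Fin 2) (Fin 2) (PowerSeries R) :=
  !![0, -1; PhiPS p R j, PowerSeries.C (R := R) a]

/-- The ordered product `C'_1 · C'_2 ⋯ C'_m` (with empty product `1`). -/
noncomputable def CadjProd (p : ℕ) (R : Type*) [CommRing R] (a : R) :
    ℕ → Matrix (Fin 2) (Fin 2) (PowerSeries R)
  | 0 => 1
  | m + 1 => CadjProd p R a m * Cadj p R a (m + 1)

/-- A sequence `(F_m)_{m≥0}` in `Λ` is norm-compatible for `a` if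
`F_{m+1} ≡ a·F_m − Φ_m·F_{m−1} (mod ω_m·Λ)` for every `m ≥ 1`. -/
def NormCompat (p : ℕ) (R : Type*) [CommRing R] (a : R) (F : ℕ → PowerSeries R) : Prop :=
  ∀ m : ℕ, 1 ≤ m →
    omegaPS p R m ∣ (F (m + 1) - (PowerSeries.C (R := R) a * F m - PhiPS p R m * F (m - 1)))


/-!
Since `C'_j (x, −Φ_j y)ᵀ = Φ_j (y, x − a y)ᵀ`, one step of the product peels off the factor
`Φ_{m+1}` and turns `(F_{m+1}, −Φ_{m+1} F_m)` into `(F_m, F_{m+1} − a F_m)`. By norm-compatibility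
this differs from `(F_m, −Φ_m F_{m−1})` by a multiple of `ω_m = X · Φ_1 ⋯ Φ_m`, so induction on `m`
applies.
-/

open PowerSeries Matrix

section

variable (p : ℕ) (R : Type*) [CommRing R]

lemma omegaPS_succ (m : ℕ) : omegaPS p R (m + 1) = PhiPS p R (m + 1) * omegaPS p R m := by
  unfold omegaPS PhiPS
  calc (1 + (X : R⟦X⟧)) ^ p ^ (m + 1) - 1
      = ((1 + X) ^ p ^ m) ^ p - 1 := by rw [← pow_mul, ← pow_succ]
    _ = (∑ i ∈ Finset.range p, ((1 + X) ^ p ^ m) ^ i) * ((1 + X) ^ p ^ m - 1) :=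
        (geom_sum_mul _ p).symm
    _ = _ := by simp only [Nat.add_sub_cancel, ← pow_mul, mul_comm]

lemma prod_PhiPS_dvd_omegaPS (m : ℕ) : (∏ j ∈ Finset.Icc 1 m, PhiPS p R j) ∣ omegaPS p R m := by
  induction m with
  | zero => simp
  | succ n ih =>
    rw [Finset.prod_Icc_succ_top (by omega), omegaPS_succ, mul_comm (PhiPS p R (n + 1))]
    exact mul_dvd_mul_right ih _

variable {R} (a : R)

lemma CadjProd_one : CadjProd p R a 1 = Cadj p R a 1 := one_mul _

lemma Cadj_mulVec (j : ℕ) (x y : R⟦X⟧) :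
    Cadj p R a j *ᵥ ![x, -(PhiPS p R j * y)] = PhiPS p R j • ![y, x - C a * y] := by
  rw [Cadj, mulVec_fin_two, smul_vec2]
  refine vec2_eq ?_ ?_ <;> simp [mul_sub, mul_left_comm, ← sub_eq_add_neg]

end

lemma dvd_mulVec_apply {ι R : Type*} [Fintype ι] [CommSemiring R] (M : Matrix ι ι R) {c : R}
    {v : ι → R} (hv : ∀ j, c ∣ v j) (i : ι) : c ∣ (M *ᵥ v) i :=
  Finset.dvd_sum fun j _ => (hv j).mul_left _

theorem adjugate_product_divisibility_general
    (p : ℕ)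
    (𝕆 : Type*) [CommRing 𝕆]
    (a : 𝕆) (F : ℕ → PowerSeries 𝕆) (hF : NormCompat p 𝕆 a F) :
    ∀ m : ℕ, 1 ≤ m → ∀ i : Fin 2,
      (∏ j ∈ Finset.Icc 1 m, PhiPS p 𝕆 j) ∣
        (CadjProd p 𝕆 a m).mulVec ![F m, -(PhiPS p 𝕆 m * F (m - 1))] i := by
  intro m hm
  induction m, hm using Nat.le_induction with
  | base =>
    intro i
    rw [Finset.Icc_self, Finset.prod_singleton, CadjProd_one, Cadj_mulVec]
    exact dvd_mul_right _ _
  | succ n hn ih =>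
    obtain ⟨G, hG⟩ := hF n hn
    have hstep : ![F n, F (n + 1) - C a * F n] =
        ![F n, -(PhiPS p 𝕆 n * F (n - 1))] + ![0, omegaPS p 𝕆 n * G] := by
      rw [vec2_add, add_zero]
      exact vec2_eq rfl (by linear_combination hG)
    have hdvd : ∀ j, (∏ j ∈ Finset.Icc 1 n, PhiPS p 𝕆 j) ∣ ![0, omegaPS p 𝕆 n * G] j :=
      Fin.forall_fin_two.2 ⟨dvd_zero _, (prod_PhiPS_dvd_omegaPS p 𝕆 n).mul_right G⟩
    intro i
    rw [CadjProd, ← mulVec_mulVec, Nat.add_sub_cancel, Cadj_mulVec, hstep, mulVec_smul,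
      mulVec_add, Finset.prod_Icc_succ_top (by omega), mul_comm]
    exact mul_dvd_mul_left _ ((ih i).add (dvd_mulVec_apply _ hdvd i))

/-- if `(F_m)` is norm-compatible for `a`, then for every `m ≥ 1` both
entries of `C'_1·C'_2⋯C'_m·(F_m, −Φ_m·F_{m−1})ᵀ` lie in `Φ_1·Φ_2⋯Φ_m·Λ`. -/
theorem adjugate_product_divisibility
    (p : ℕ) (hp : p.Prime) (hp5 : 5 ≤ p)
    (𝕆 : Type*) [CommRing 𝕆] [IsDomain 𝕆] [IsDiscreteValuationRing 𝕆] [CharZero 𝕆]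
    (ϖ : 𝕆) (hϖ : Irreducible ϖ) (hpϖ : ϖ ∣ (p : 𝕆))
    (a : 𝕆) (F : ℕ → PowerSeries 𝕆) (hF : NormCompat p 𝕆 a F) :
    ∀ m : ℕ, 1 ≤ m → ∀ i : Fin 2,
      (∏ j ∈ Finset.Icc 1 m, PhiPS p 𝕆 j) ∣
        (CadjProd p 𝕆 a m).mulVec ![F m, -(PhiPS p 𝕆 m * F (m - 1))] i :=
  adjugate_product_divisibility_general p 𝕆 a F hF
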